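/- (Doubly optimal) Let b*_t(s,a) = q_{π,t}(s,a). For every baseline function b, every behavior policy μ ∈ Λ^b, every time t, and every state s: Var( G^{b*}(τ^{μ^{*,b*}}_{t:T−1}) | S_t = s ) ≤ Var( G^b(τ^μ_{t:T−1}) | S_t = s ); i.e., the pair (μ^{*,b*}, b*) solves the bi-level optimization min over baselines b and behavior policies μ ∈ Λ^b of the conditional variance of the estimator. -/

import Mathlib

open Finset

namespace DOpt

variable {S A : Type}

/-- A time-indexed policy: for each time step and state, a probability distribution on actions. -/
def IsPolicy [Fintype A] (μ : ℕ → S → A → ℝ) : Prop :=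
  ∀ t s, (∀ a, 0 ≤ μ t s a) ∧ ∑ a, μ t s a = 1

/-- A transition probability kernel on the finite state space. -/
def IsKernel [Fintype S] (p : S → A → S → ℝ) : Prop :=
  ∀ s a, (∀ s', 0 ≤ p s a s') ∧ ∑ s', p s a s' = 1

/-- Action value `q_{π,t}(s,a)` computed with `n` remaining transitions after time `t`
(`n = T - 1 - t` in a horizon-`T` MDP). -/
noncomputable def qval [Fintype S] [Fintype A] (p : S → A → S → ℝ) (π : ℕ → S → A → ℝ)
    (r : S → A → ℝ) : ℕ → ℕ → S → A → ℝ
  | 0, _, s, a => r s a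
  | n + 1, t, s, a =>
      r s a + ∑ s', p s a s' * ∑ a', π (t + 1) s' a' * qval p π r n (t + 1) s' a'

/-- `q_{π,t}(s,a)` in the horizon-`T` MDP. -/
noncomputable def qf [Fintype S] [Fintype A] (T : ℕ) (p : S → A → S → ℝ)
    (π : ℕ → S → A → ℝ) (r : S → A → ℝ) (t : ℕ) (s : S) (a : A) : ℝ :=
  qval p π r (T - 1 - t) t s a

/-- `v_{π,t}(s) = Σ_a π_t(a|s) q_{π,t}(s,a)`. -/
noncomputable def vf [Fintype S] [Fintype A] (T : ℕ) (p : S → A → S → ℝ)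
    (π : ℕ → S → A → ℝ) (r : S → A → ℝ) (t : ℕ) (s : S) : ℝ :=
  ∑ a, π t s a * qf T p π r t s a

/-- `ν_{π,t}(s,a) = Var_{s' ∼ p(·|s,a)}(v_{π,t+1}(s'))` for `t ≤ T-2`, and `0` at `t = T-1`. -/
noncomputable def nuf [Fintype S] [Fintype A] (T : ℕ) (p : S → A → S → ℝ)
    (π : ℕ → S → A → ℝ) (r : S → A → ℝ) (t : ℕ) (s : S) (a : A) : ℝ :=
  if t + 2 ≤ T then
    (∑ s', p s a s' * (vf T p π r (t + 1) s') ^ 2) -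
      (∑ s', p s a s' * vf T p π r (t + 1) s') ^ 2
  else 0

/-- Trajectories with `n` further transitions after the first action:
`(a_t, s_{t+1}, a_{t+1}, …, s_{t+n}, a_{t+n})`. -/
def Traj (S A : Type) : ℕ → Type
  | 0 => A
  | n + 1 => A × S × Traj S A n

/-- Expectation, over trajectories generated by the behavior policy `μ` starting at time `t`
in state `s` with `n` further transitions, of a function `f` of the trajectory. -/
noncomputable def Exp [Fintype S] [Fintype A] (p : S → A → S → ℝ) (μ : ℕ → S → A → ℝ) :
    (n : ℕ) → ℕ → S → (Traj S A n → ℝ) → ℝ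
  | 0, t, s, f => ∑ a, μ t s a * f a
  | n + 1, t, s, f =>
      ∑ a, μ t s a * ∑ s', p s a s' * Exp p μ n (t + 1) s' (fun τ => f (a, s', τ))

/-- Conditional variance of a function of the trajectory, given `S_t = s`. -/
noncomputable def Var [Fintype S] [Fintype A] (p : S → A → S → ℝ) (μ : ℕ → S → A → ℝ)
    (n : ℕ) (t : ℕ) (s : S) (f : Traj S A n → ℝ) : ℝ :=
  Exp p μ n t s (fun τ => (f τ) ^ 2) - (Exp p μ n t s f) ^ 2

/-- `b̄_t(s) = Σ_a π_t(a|s) b_t(s,a)`. -/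
noncomputable def bbar [Fintype A] (π : ℕ → S → A → ℝ) (b : ℕ → S → A → ℝ)
    (t : ℕ) (s : S) : ℝ :=
  ∑ a, π t s a * b t s a

/-- The per-decision importance-sampling estimator `G^b` with baseline `b`, target policy `π`
and behavior policy `μ`, as a function of the trajectory from time `t` (with `n` further
transitions, `n = T - 1 - t`). -/
noncomputable def Gest [Fintype S] [Fintype A] (π μ : ℕ → S → A → ℝ) (r : S → A → ℝ)
    (b : ℕ → S → A → ℝ) : (n : ℕ) → ℕ → S → Traj S A n → ℝ
  | 0, t, s, a => (π t s a / μ t s a) * (r s a - b t s a) + bbar π b t s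
  | n + 1, t, s, (a, s', τ) =>
      (π t s a / μ t s a) * (r s a + Gest π μ r b n (t + 1) s' τ - b t s a) + bbar π b t s

/-- Normalization of a weight vector into a probability distribution; the uniform distribution
when the total weight vanishes. -/
noncomputable def normPol [Fintype A] (w : A → ℝ) (a : A) : ℝ :=
  if (∑ a', w a') = 0 then ((Fintype.card A : ℝ))⁻¹ else w a / ∑ a', w a'

/-- `u_{π,t}(s,a)` (with baseline `b`), defined backwards in time together with the optimal
behavior policy `μ*`; the first argument is the number `n = T - 1 - t` of remaining
transitions after time `t`. -/
noncomputable def uAux [Fintype S] [Fintype A] (T : ℕ) (p : S → A → S → ℝ)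
    (π : ℕ → S → A → ℝ) (r : S → A → ℝ) (b : ℕ → S → A → ℝ) :
    ℕ → ℕ → S → A → ℝ
  | 0, t, s, a => (qf T p π r t s a - b t s a) ^ 2
  | n + 1, t, s, a =>
      (qf T p π r t s a - b t s a) ^ 2 + nuf T p π r t s a +
        ∑ s', p s a s' *
          Var p
            (fun t' s₁ a₁ => normPol (fun a₂ =>
              π t' s₁ a₂ * Real.sqrt (uAux T p π r b (n - (t' - (t + 1))) t' s₁ a₂)) a₁)
            n (t + 1) s'
            (Gest π
              (fun t' s₁ a₁ => normPol (fun a₂ =>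
                π t' s₁ a₂ * Real.sqrt (uAux T p π r b (n - (t' - (t + 1))) t' s₁ a₂)) a₁)
              r b n (t + 1) s')
  termination_by n => n
  decreasing_by all_goals omega

/-- `u_{π,t}(s,a)` in the horizon-`T` MDP, with baseline `b`. -/
noncomputable def uf [Fintype S] [Fintype A] (T : ℕ) (p : S → A → S → ℝ)
    (π : ℕ → S → A → ℝ) (r : S → A → ℝ) (b : ℕ → S → A → ℝ) (t : ℕ) (s : S) (a : A) : ℝ :=
  uAux T p π r b (T - 1 - t) t s a

/-- The optimal behavior policy `μ*_t(a|s) ∝ π_t(a|s) √(u_{π,t}(s,a))` tailored to the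
baseline `b` (uniform when all the weights vanish). -/
noncomputable def mustar [Fintype S] [Fintype A] (T : ℕ) (p : S → A → S → ℝ)
    (π : ℕ → S → A → ℝ) (r : S → A → ℝ) (b : ℕ → S → A → ℝ) (t : ℕ) (s : S) (a : A) : ℝ :=
  normPol (fun a' => π t s a' * Real.sqrt (uf T p π r b t s a')) a

/-- Conditional expectation `E[G^b(τ^μ_{t:T-1}) | S_t = s]`. -/
noncomputable def ExpG [Fintype S] [Fintype A] (T : ℕ) (p : S → A → S → ℝ)
    (π μ : ℕ → S → A → ℝ) (r : S → A → ℝ) (b : ℕ → S → A → ℝ) (t : ℕ) (s : S) : ℝ :=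
  Exp p μ (T - 1 - t) t s (Gest π μ r b (T - 1 - t) t s)

/-- Conditional variance `Var(G^b(τ^μ_{t:T-1}) | S_t = s)`. -/
noncomputable def VarG [Fintype S] [Fintype A] (T : ℕ) (p : S → A → S → ℝ)
    (π μ : ℕ → S → A → ℝ) (r : S → A → ℝ) (b : ℕ → S → A → ℝ) (t : ℕ) (s : S) : ℝ :=
  Var p μ (T - 1 - t) t s (Gest π μ r b (T - 1 - t) t s)

/-- Membership in the enlarged policy-search space
`Λ = {μ : ∀ t,s,a, μ_t(a|s) = 0 → π_t(a|s)·u_{π,t}(s,a) = 0}`. -/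
def inLambda [Fintype S] [Fintype A] (T : ℕ) (p : S → A → S → ℝ)
    (π : ℕ → S → A → ℝ) (r : S → A → ℝ) (b : ℕ → S → A → ℝ) (μ : ℕ → S → A → ℝ) : Prop :=
  ∀ t s a, t < T → μ t s a = 0 → π t s a * uf T p π r b t s a = 0


/-- The optimal baseline `b*_t(s,a) = q_{π,t}(s,a)`. -/
noncomputable def bstar [Fintype S] [Fintype A] (T : ℕ) (p : S → A → S → ℝ)
    (π : ℕ → S → A → ℝ) (r : S → A → ℝ) : ℕ → S → A → ℝ :=
  fun t s a => qf T p π r t s a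

/-- The zero baseline: with it, `Gest` is the plain PDIS estimator `G^{PDIS}`. -/
def zerob : ℕ → S → A → ℝ := fun _ _ _ => 0

/-!
Write `u^μ` for `u` with the variance of the future estimator taken under a behavior policy `μ`.
Conditioning on the first action, `G^b` is unbiased for `v` under every `μ ∈ Λ^b`, and
`Var_μ(G^b) = E_μ[ρ² u^μ] - (v - b̄)²`. By Cauchy–Schwarz, `E_μ[ρ² u] ≥ (∑_a π √u)²`, with
equality at `μ ∝ π √u`; so by backward induction `μ^{*,b}` attains the least variance
`(∑_a π √u^b)² - (v - b̄)²` over `Λ^b`. For `b* = q` the term `v - b̄` vanishes, and backward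
induction gives `u^{b*} + (q - b)² ≤ u^b`; Minkowski's inequality
`(∑ π √u^{b*})² + (∑ π (q - b))² ≤ (∑ π √(u^{b*} + (q - b)²))²` then shows that the least
variance for `b*` is at most the least variance for any `b`.
-/

section FiniteSums

variable {ι : Type*} [Fintype ι] {w : ι → ℝ}

theorem sum_mul_affine (hw : ∑ i, w i = 1) (x : ι → ℝ) (α β : ℝ) :
    ∑ i, w i * (α * x i + β) = α * ∑ i, w i * x i + β := by
  simp only [mul_add, sum_add_distrib, ← sum_mul, hw, one_mul, mul_left_comm _ α, ← mul_sum]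

theorem sum_mul_sq_affine (hw : ∑ i, w i = 1) (x : ι → ℝ) (α β : ℝ) :
    ∑ i, w i * (α * x i + β) ^ 2 =
      α ^ 2 * (∑ i, w i * x i ^ 2 - (∑ i, w i * x i) ^ 2) + (α * ∑ i, w i * x i + β) ^ 2 := by
  have expand : ∀ i, w i * (α * x i + β) ^ 2 =
      α ^ 2 * (w i * x i ^ 2) + 2 * α * β * (w i * x i) + β ^ 2 * w i := fun i => by ring
  simp only [expand, sum_add_distrib, ← mul_sum, hw]
  ring

theorem sq_sum_mul_le (hw0 : ∀ i, 0 ≤ w i) (hw : ∑ i, w i = 1) (x : ι → ℝ) :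
    (∑ i, w i * x i) ^ 2 ≤ ∑ i, w i * x i ^ 2 := by
  simpa using (even_two.convexOn_pow (𝕜 := ℝ)).map_sum_le (t := univ) (w := w) (p := x)
    (fun i _ => hw0 i) hw (fun i _ => Set.mem_univ _)

theorem sum_mul_div_of_eq_zero {g : ι → ℝ} (hg : ∀ i, w i = 0 → g i = 0) :
    ∑ i, w i * (g i / w i) = ∑ i, g i := by
  refine sum_congr rfl fun i _ => ?_
  by_cases h : w i = 0
  · simp [h, hg i h]
  · field_simp

theorem sum_mul_ratio_affine (hw : ∑ i, w i = 1) {π m : ι → ℝ}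
    (hcov : ∀ i, w i = 0 → π i * m i = 0) (B : ℝ) :
    ∑ i, w i * (π i / w i * m i + B) = ∑ i, π i * m i + B := by
  simp only [mul_add, sum_add_distrib, ← sum_mul, hw, one_mul, div_mul_eq_mul_div,
    sum_mul_div_of_eq_zero hcov]

theorem sum_mul_ratio_sq_affine (hw : ∑ i, w i = 1) {π m : ι → ℝ}
    (hcov : ∀ i, w i = 0 → π i * m i = 0) (σ : ι → ℝ) (B : ℝ) :
    ∑ i, w i * ((π i / w i) ^ 2 * σ i + (π i / w i * m i + B) ^ 2) =
      ∑ i, w i * ((π i / w i) ^ 2 * (m i ^ 2 + σ i)) + 2 * B * ∑ i, π i * m i + B ^ 2 := by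
  have expand : ∀ i, w i * ((π i / w i) ^ 2 * σ i + (π i / w i * m i + B) ^ 2) =
      w i * ((π i / w i) ^ 2 * (m i ^ 2 + σ i)) + 2 * B * (w i * (π i * m i / w i))
        + B ^ 2 * w i := fun i => by ring
  simp only [expand, sum_add_distrib, ← mul_sum, hw, sum_mul_div_of_eq_zero hcov]
  ring

/-- Minkowski's inequality for the two-dimensional vectors `(√(x i), y i)`. -/
theorem sq_add_sq_le_sq_sum_sqrt (hw : ∀ i, 0 ≤ w i) {x : ι → ℝ} (hx : ∀ i, 0 ≤ x i)
    (y : ι → ℝ) :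
    (∑ i, w i * √(x i)) ^ 2 + (∑ i, w i * y i) ^ 2 ≤ (∑ i, w i * √(x i + y i ^ 2)) ^ 2 := by
  have hsum : ∑ i, (w i : ℂ) * (√(x i) + y i * Complex.I) =
      ((∑ i, w i * √(x i) : ℝ) : ℂ) + ((∑ i, w i * y i : ℝ) : ℂ) * Complex.I := by
    push_cast
    simp only [mul_add, sum_add_distrib, sum_mul, mul_assoc]
  have htriangle := norm_sum_le univ fun i => (w i : ℂ) * (√(x i) + y i * Complex.I)
  simp only [hsum, norm_mul, Complex.norm_real, Real.norm_of_nonneg (hw _),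
    Complex.norm_add_mul_I, Real.sq_sqrt (hx _)] at htriangle
  exact (Real.sqrt_le_iff.mp htriangle).2

end FiniteSums

section NormalizedWeights

variable [Fintype A] {g : A → ℝ}

theorem normPol_nonneg (hg : ∀ a, 0 ≤ g a) (a : A) : 0 ≤ normPol g a := by
  unfold normPol
  split_ifs
  · positivity
  · exact div_nonneg (hg a) (sum_nonneg fun i _ => hg i)

theorem sum_normPol [Nonempty A] (g : A → ℝ) : ∑ a, normPol g a = 1 := by
  unfold normPol
  split_ifs with h
  · simp
  · rw [← sum_div, div_self h]

theorem eq_zero_of_normPol_eq_zero [Nonempty A] {a : A} (h : normPol g a = 0) : g a = 0 := by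
  unfold normPol at h
  split_ifs at h with hsum
  · simp at h
  · exact (div_eq_zero_iff.mp h).resolve_right hsum

/-- Equality case of the Cauchy–Schwarz bound `(∑ g)² ≤ ∑ w (g / w)²`. -/
theorem sum_normPol_mul_div_sq (hg : ∀ a, 0 ≤ g a) :
    ∑ a, normPol g a * (g a / normPol g a) ^ 2 = (∑ a, g a) ^ 2 := by
  by_cases hZ : ∑ a, g a = 0
  · have hg0 : ∀ a, g a = 0 := fun a =>
      (sum_eq_zero_iff_of_nonneg fun i _ => hg i).mp hZ a (mem_univ a)
    simp [hg0]
  · have hterm : ∀ a, normPol g a * (g a / normPol g a) ^ 2 = (∑ a, g a) * g a := by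
      intro a
      by_cases hga : g a = 0
      · simp [hga]
      · simp only [normPol, if_neg hZ]
        field_simp
    rw [sum_congr rfl fun a _ => hterm a, ← mul_sum, sq]

theorem isPolicy_normPol [Nonempty A] {S : Type} {W : ℕ → S → A → ℝ}
    (hW : ∀ t s a, 0 ≤ W t s a) : IsPolicy fun t s => normPol (W t s) :=
  fun t s => ⟨normPol_nonneg (hW t s), sum_normPol _⟩

end NormalizedWeights

section Expectation

variable [Fintype S] [Fintype A] {p : S → A → S → ℝ} {μ : ℕ → S → A → ℝ}

theorem Exp_add (n t : ℕ) (s : S) (f g : Traj S A n → ℝ) :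
    Exp p μ n t s (fun τ => f τ + g τ) = Exp p μ n t s f + Exp p μ n t s g := by
  induction n generalizing t s with
  | zero => simp only [Exp, mul_add, sum_add_distrib]
  | succ n ih => simp only [Exp, ih, mul_add, sum_add_distrib]

theorem Exp_const_mul (n t : ℕ) (s : S) (c : ℝ) (f : Traj S A n → ℝ) :
    Exp p μ n t s (fun τ => c * f τ) = c * Exp p μ n t s f := by
  induction n generalizing t s with
  | zero => simp only [Exp, mul_sum, mul_left_comm]
  | succ n ih => simp only [Exp, ih, mul_sum, mul_left_comm]

theorem Exp_const (hp : IsKernel p) (hμ : IsPolicy μ) (n t : ℕ) (s : S) (c : ℝ) :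
    Exp p μ n t s (fun _ => c) = c := by
  induction n generalizing t s with
  | zero => simp only [Exp, ← sum_mul, (hμ t s).2, one_mul]
  | succ n ih => simp only [Exp, ih, ← sum_mul, (hp _ _).2, (hμ t s).2, one_mul]

theorem Exp_nonneg (hp : IsKernel p) (hμ : IsPolicy μ) (n t : ℕ) (s : S)
    (f : Traj S A n → ℝ) (hf : ∀ τ, 0 ≤ f τ) : 0 ≤ Exp p μ n t s f := by
  induction n generalizing t s with
  | zero => exact sum_nonneg fun a _ => mul_nonneg ((hμ t s).1 a) (hf a)
  | succ n ih =>
    exact sum_nonneg fun a _ => mul_nonneg ((hμ t s).1 a) <|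
      sum_nonneg fun s' _ => mul_nonneg ((hp s a).1 s') <|
        ih (t + 1) s' _ fun τ => hf (a, s', τ)

theorem Exp_affine (hp : IsKernel p) (hμ : IsPolicy μ) (n t : ℕ) (s : S) (f : Traj S A n → ℝ)
    (α β : ℝ) :
    Exp p μ n t s (fun τ => α * f τ + β) = α * Exp p μ n t s f + β := by
  rw [Exp_add, Exp_const_mul, Exp_const hp hμ]

theorem Exp_sq_affine (hp : IsKernel p) (hμ : IsPolicy μ) (n t : ℕ) (s : S) (f : Traj S A n → ℝ)
    (α β : ℝ) :
    Exp p μ n t s (fun τ => (α * f τ + β) ^ 2) =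
      α ^ 2 * Var p μ n t s f + (α * Exp p μ n t s f + β) ^ 2 := by
  have expand : (fun τ => (α * f τ + β) ^ 2) =
      fun τ => α ^ 2 * f τ ^ 2 + (2 * α * β * f τ + β ^ 2) := by
    funext τ; ring
  rw [expand, Exp_add, Exp_const_mul, Exp_affine hp hμ, Var]
  ring

theorem Var_nonneg (hp : IsKernel p) (hμ : IsPolicy μ) (n t : ℕ) (s : S) (f : Traj S A n → ℝ) :
    0 ≤ Var p μ n t s f := by
  have hcentered := Exp_sq_affine hp hμ n t s f 1 (-Exp p μ n t s f)
  have hnonneg := Exp_nonneg hp hμ n t s _ fun τ => sq_nonneg (1 * f τ + -Exp p μ n t s f)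
  linarith

end Expectation

section PolicyCongr

variable [Fintype S] [Fintype A] {μ μ' : ℕ → S → A → ℝ} {n t : ℕ}

theorem Exp_congr_policy {p : S → A → S → ℝ} (h : ∀ t', t ≤ t' → μ t' = μ' t') (s : S)
    (f : Traj S A n → ℝ) : Exp p μ n t s f = Exp p μ' n t s f := by
  induction n generalizing t s with
  | zero => simp only [Exp, h t le_rfl]
  | succ n ih => simp only [Exp, h t le_rfl, ih (t := t + 1) fun t' ht' => h t' (by omega)]

theorem Gest_congr_policy {π : ℕ → S → A → ℝ} {r : S → A → ℝ} {b : ℕ → S → A → ℝ}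
    (h : ∀ t', t ≤ t' → μ t' = μ' t') (s : S) : Gest π μ r b n t s = Gest π μ' r b n t s := by
  induction n generalizing t s with
  | zero => funext a; simp only [Gest, h t le_rfl]
  | succ n ih =>
    funext ⟨a, s', τ⟩
    simp only [Gest, h t le_rfl]
    rw [ih fun t' ht' => h t' (by omega)]

theorem Var_Gest_congr_policy {p : S → A → S → ℝ} {π : ℕ → S → A → ℝ} {r : S → A → ℝ}
    {b : ℕ → S → A → ℝ} (h : ∀ t', t ≤ t' → μ t' = μ' t') (s : S) :
    Var p μ n t s (Gest π μ r b n t s) = Var p μ' n t s (Gest π μ' r b n t s) := by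
  simp only [Var, Gest_congr_policy h, Exp_congr_policy h]

end PolicyCongr

section ValueFunctions

variable [Fintype S] [Fintype A] {T t : ℕ} {p : S → A → S → ℝ} {π : ℕ → S → A → ℝ}
  {r : S → A → ℝ}

theorem qf_eq_of_succ_eq (hT : t + 1 = T) (s : S) (a : A) : qf T p π r t s a = r s a := by
  rw [qf, show T - 1 - t = 0 by omega, qval]

theorem qf_eq_add_sum (hT : t + 2 ≤ T) (s : S) (a : A) :
    qf T p π r t s a = r s a + ∑ s', p s a s' * vf T p π r (t + 1) s' := by
  rw [qf, show T - 1 - t = T - 1 - (t + 1) + 1 by omega, qval]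
  rfl

theorem nuf_eq (hT : t + 2 ≤ T) (s : S) (a : A) :
    nuf T p π r t s a = ∑ s', p s a s' * vf T p π r (t + 1) s' ^ 2 -
      (∑ s', p s a s' * vf T p π r (t + 1) s') ^ 2 :=
  if_pos hT

theorem nuf_nonneg (hp : IsKernel p) (s : S) (a : A) : 0 ≤ nuf T p π r t s a := by
  unfold nuf
  split_ifs
  · linarith [sq_sum_mul_le (hp s a).1 (hp s a).2 (vf T p π r (t + 1))]
  · rfl

noncomputable def meanGap (T : ℕ) (p : S → A → S → ℝ) (π : ℕ → S → A → ℝ) (r : S → A → ℝ)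
    (b : ℕ → S → A → ℝ) (t : ℕ) (s : S) : ℝ :=
  ∑ a, π t s a * (qf T p π r t s a - b t s a)

theorem vf_eq_meanGap_add_bbar (b : ℕ → S → A → ℝ) (s : S) :
    vf T p π r t s = meanGap T p π r b t s + bbar π b t s := by
  simp only [vf, meanGap, bbar, ← sum_add_distrib, mul_sub, sub_add_cancel]

end ValueFunctions

/-- `u_{π,t}` with the variance of the future estimator taken under an arbitrary behavior
policy `μ` instead of `μ*`. -/
noncomputable def uWith [Fintype S] [Fintype A] (T : ℕ) (p : S → A → S → ℝ)
    (π : ℕ → S → A → ℝ) (r : S → A → ℝ) (b μ : ℕ → S → A → ℝ) : ℕ → ℕ → S → A → ℝ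
  | 0, t, s, a => (qf T p π r t s a - b t s a) ^ 2
  | n + 1, t, s, a => (qf T p π r t s a - b t s a) ^ 2 + nuf T p π r t s a +
      ∑ s', p s a s' * Var p μ n (t + 1) s' (Gest π μ r b n (t + 1) s')

/-- The least variance of `G^b` over behavior policies in `Λ^b`. -/
noncomputable def optVar [Fintype S] [Fintype A] (T : ℕ) (p : S → A → S → ℝ)
    (π : ℕ → S → A → ℝ) (r : S → A → ℝ) (b : ℕ → S → A → ℝ) (n t : ℕ) (s : S) : ℝ :=
  (∑ a, π t s a * √(uAux T p π r b n t s a)) ^ 2 - meanGap T p π r b t s ^ 2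

section OptimalPolicy

variable [Fintype S] [Fintype A] {T n t : ℕ} {p : S → A → S → ℝ} {π : ℕ → S → A → ℝ}
  {r : S → A → ℝ} {b μ : ℕ → S → A → ℝ}

theorem uAux_eq_uWith_mustar (hT : n + t + 1 = T) (s : S) (a : A) :
    uAux T p π r b n t s a = uWith T p π r b (mustar T p π r b) n t s a := by
  cases n with
  | zero => rw [uAux, uWith]
  | succ n =>
    rw [uAux, uWith]
    refine congrArg _ (sum_congr rfl fun s' _ => congrArg _ (Var_Gest_congr_policy ?_ s'))
    intro t' ht'
    funext s₁ a₁
    simp only [mustar, uf]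
    rw [show n - (t' - (t + 1)) = T - 1 - t' by omega]

theorem sq_le_uWith (hp : IsKernel p) (hμ : IsPolicy μ) (s : S) (a : A) :
    (qf T p π r t s a - b t s a) ^ 2 ≤ uWith T p π r b μ n t s a := by
  cases n with
  | zero => rw [uWith]
  | succ n =>
    rw [uWith]
    have hVar : 0 ≤ ∑ s', p s a s' * Var p μ n (t + 1) s' (Gest π μ r b n (t + 1) s') :=
      sum_nonneg fun s' _ => mul_nonneg ((hp s a).1 s') (Var_nonneg hp hμ _ _ _ _)
    linarith [nuf_nonneg (T := T) (π := π) (r := r) (t := t) hp s a]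

variable [Nonempty A]

theorem isPolicy_mustar (hπ : IsPolicy π) : IsPolicy (mustar T p π r b) :=
  isPolicy_normPol (W := fun t s a => π t s a * √(uf T p π r b t s a))
    fun t s a => mul_nonneg ((hπ t s).1 a) (Real.sqrt_nonneg _)

theorem sq_le_uAux (hp : IsKernel p) (hπ : IsPolicy π) (hT : n + t + 1 = T) (s : S) (a : A) :
    (qf T p π r t s a - b t s a) ^ 2 ≤ uAux T p π r b n t s a := by
  rw [uAux_eq_uWith_mustar hT]
  exact sq_le_uWith hp (isPolicy_mustar hπ) s a

theorem uAux_nonneg (hp : IsKernel p) (hπ : IsPolicy π) (hT : n + t + 1 = T) (s : S) (a : A) :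
    0 ≤ uAux T p π r b n t s a :=
  (sq_nonneg _).trans (sq_le_uAux hp hπ hT s a)

theorem inLambda.mul_sub_eq_zero (hΛ : inLambda T p π r b μ) (hp : IsKernel p)
    (hπ : IsPolicy π) :
    ∀ t s a, t < T → μ t s a = 0 → π t s a * (qf T p π r t s a - b t s a) = 0 := by
  intro t s a ht h0
  rcases mul_eq_zero.mp (hΛ t s a ht h0) with h | h
  · rw [h, zero_mul]
  · have hsq := sq_le_uAux (r := r) (b := b) hp hπ (show T - 1 - t + t + 1 = T by omega) s a
    rw [uf] at h
    rw [h] at hsq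
    rw [pow_eq_zero_iff two_ne_zero |>.mp (le_antisymm hsq (sq_nonneg _)), mul_zero]

theorem inLambda_mustar (hp : IsKernel p) (hπ : IsPolicy π) :
    inLambda T p π r b (mustar T p π r b) := by
  intro t s a ht h0
  have hw : π t s a * √(uf T p π r b t s a) = 0 :=
    eq_zero_of_normPol_eq_zero (g := fun a' => π t s a' * √(uf T p π r b t s a')) h0
  rcases mul_eq_zero.mp hw with h | h
  · rw [h, zero_mul]
  · rw [uf, Real.sqrt_eq_zero (uAux_nonneg hp hπ (T := T) (t := t) (by omega) s a)] at h
    rw [uf, h, mul_zero]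

end OptimalPolicy

section Moments

variable [Fintype S] [Fintype A] {T : ℕ} {p : S → A → S → ℝ} {π : ℕ → S → A → ℝ}
  {r : S → A → ℝ} {b μ : ℕ → S → A → ℝ}

theorem Gest_succ_eq (n t : ℕ) (s : S) (a : A) (s' : S) (τ : Traj S A n) :
    Gest π μ r b (n + 1) t s (a, s', τ) = π t s a / μ t s a * Gest π μ r b n (t + 1) s' τ +
      (π t s a / μ t s a * (r s a - b t s a) + bbar π b t s) := by
  rw [Gest]
  ring

theorem sum_mul_ratio_eq_vf (hμ : IsPolicy μ) {t : ℕ} {s : S}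
    (hcov : ∀ a, μ t s a = 0 → π t s a * (qf T p π r t s a - b t s a) = 0) :
    ∑ a, μ t s a * (π t s a / μ t s a * (qf T p π r t s a - b t s a) + bbar π b t s) =
      vf T p π r t s := by
  rw [sum_mul_ratio_affine (hμ t s).2 hcov, vf_eq_meanGap_add_bbar b, meanGap]

theorem Exp_Gest_eq_vf (hp : IsKernel p) (hμ : IsPolicy μ)
    (hcov : ∀ t s a, t < T → μ t s a = 0 → π t s a * (qf T p π r t s a - b t s a) = 0)
    (n t : ℕ) (hT : n + t + 1 = T) (s : S) :
    Exp p μ n t s (Gest π μ r b n t s) = vf T p π r t s := by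
  induction n generalizing t s with
  | zero =>
    rw [← sum_mul_ratio_eq_vf hμ (hcov t s · (by omega))]
    simp only [Exp, Gest, qf_eq_of_succ_eq (show t + 1 = T by omega)]
  | succ n ih =>
    rw [← sum_mul_ratio_eq_vf hμ (hcov t s · (by omega))]
    refine sum_congr rfl fun a _ => congrArg _ ?_
    simp only [Gest_succ_eq, Exp_affine hp hμ, ih (t + 1) (by omega), sum_mul_affine (hp s a).2,
      qf_eq_add_sum (show t + 2 ≤ T by omega)]
    ring

theorem Var_Gest_eq (hp : IsKernel p) (hμ : IsPolicy μ)
    (hcov : ∀ t s a, t < T → μ t s a = 0 → π t s a * (qf T p π r t s a - b t s a) = 0)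
    (n t : ℕ) (hT : n + t + 1 = T) (s : S) :
    Var p μ n t s (Gest π μ r b n t s) =
      ∑ a, μ t s a * ((π t s a / μ t s a) ^ 2 * uWith T p π r b μ n t s a) -
        meanGap T p π r b t s ^ 2 := by
  have hmoment : Exp p μ n t s (fun τ => Gest π μ r b n t s τ ^ 2) =
      ∑ a, μ t s a * ((π t s a / μ t s a) ^ 2 *
          (uWith T p π r b μ n t s a - (qf T p π r t s a - b t s a) ^ 2) +
        (π t s a / μ t s a * (qf T p π r t s a - b t s a) + bbar π b t s) ^ 2) := by
    cases n with
    | zero =>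
      simp only [Exp, Gest, uWith, qf_eq_of_succ_eq (show t + 1 = T by omega), sub_self, mul_zero,
        zero_add]
    | succ n =>
      refine sum_congr rfl fun a _ => congrArg _ ?_
      simp only [Gest_succ_eq, Exp_sq_affine hp hμ, Exp_Gest_eq_vf hp hμ hcov n (t + 1) (by omega),
        mul_add, sum_add_distrib, mul_left_comm (p s a _), ← mul_sum]
      rw [sum_mul_sq_affine (hp s a).2, uWith, nuf_eq (show t + 2 ≤ T by omega),
        qf_eq_add_sum (show t + 2 ≤ T by omega)]
      ring
  rw [Var, hmoment, Exp_Gest_eq_vf hp hμ hcov n t hT,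
    sum_mul_ratio_sq_affine (hμ t s).2 (hcov t s · (by omega)), vf_eq_meanGap_add_bbar b, meanGap]
  simp only [add_sub_cancel]
  ring

end Moments

section Optimality

variable [Fintype S] [Fintype A] [Nonempty A] {T : ℕ} {p : S → A → S → ℝ}
  {π : ℕ → S → A → ℝ} {r : S → A → ℝ} {b μ : ℕ → S → A → ℝ}

theorem Var_Gest_mustar (hp : IsKernel p) (hπ : IsPolicy π) (n t : ℕ) (hT : n + t + 1 = T)
    (s : S) :
    Var p (mustar T p π r b) n t s (Gest π (mustar T p π r b) r b n t s) =
      optVar T p π r b n t s := by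
  rw [Var_Gest_eq hp (isPolicy_mustar hπ) ((inLambda_mustar hp hπ).mul_sub_eq_zero hp hπ) n t hT,
    optVar,
    ← sum_normPol_mul_div_sq fun a => mul_nonneg ((hπ t s).1 a) (Real.sqrt_nonneg _)]
  congr 1
  refine sum_congr rfl fun a _ => ?_
  simp only [mustar, uf, show T - 1 - t = n by omega]
  rw [← uAux_eq_uWith_mustar hT, div_pow, div_pow, mul_pow,
    Real.sq_sqrt (uAux_nonneg hp hπ hT s a)]
  ring

theorem optVar_le_Var_Gest_of_le (hp : IsKernel p) (hπ : IsPolicy π) (hμ : IsPolicy μ)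
    (hΛ : inLambda T p π r b μ) (n t : ℕ) (hT : n + t + 1 = T) (s : S)
    (hle : ∀ a, uAux T p π r b n t s a ≤ uWith T p π r b μ n t s a) :
    optVar T p π r b n t s ≤ Var p μ n t s (Gest π μ r b n t s) := by
  have hsqrt : ∀ a, μ t s a = 0 → π t s a * √(uAux T p π r b n t s a) = 0 := by
    intro a h0
    have h := hΛ t s a (by omega) h0
    rw [uf, show T - 1 - t = n by omega] at h
    rcases mul_eq_zero.mp h with h | h <;> simp [h]
  rw [Var_Gest_eq hp hμ (hΛ.mul_sub_eq_zero hp hπ) n t hT, optVar]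
  gcongr
  calc (∑ a, π t s a * √(uAux T p π r b n t s a)) ^ 2
      = (∑ a, μ t s a * (π t s a * √(uAux T p π r b n t s a) / μ t s a)) ^ 2 := by
        rw [sum_mul_div_of_eq_zero hsqrt]
    _ ≤ ∑ a, μ t s a * (π t s a * √(uAux T p π r b n t s a) / μ t s a) ^ 2 :=
        sq_sum_mul_le (hμ t s).1 (hμ t s).2 _
    _ = ∑ a, μ t s a * ((π t s a / μ t s a) ^ 2 * uAux T p π r b n t s a) := by
        refine sum_congr rfl fun a _ => ?_
        rw [div_pow, div_pow, mul_pow, Real.sq_sqrt (uAux_nonneg hp hπ hT s a)]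
        ring
    _ ≤ ∑ a, μ t s a * ((π t s a / μ t s a) ^ 2 * uWith T p π r b μ n t s a) := by
        gcongr with a
        · exact (hμ t s).1 a
        · exact hle a

theorem uAux_le_uWith (hp : IsKernel p) (hπ : IsPolicy π) (hμ : IsPolicy μ)
    (hΛ : inLambda T p π r b μ) (n t : ℕ) (hT : n + t + 1 = T) (s : S) (a : A) :
    uAux T p π r b n t s a ≤ uWith T p π r b μ n t s a := by
  induction n generalizing t s a with
  | zero => rw [uAux_eq_uWith_mustar hT, uWith, uWith]
  | succ n ih =>
    rw [uAux_eq_uWith_mustar hT, uWith, uWith]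
    gcongr with s'
    · exact (hp s a).1 s'
    rw [Var_Gest_mustar hp hπ n (t + 1) (by omega)]
    exact optVar_le_Var_Gest_of_le hp hπ hμ hΛ n (t + 1) (by omega) s' (ih (t + 1) (by omega) s')

theorem optVar_le_Var_Gest (hp : IsKernel p) (hπ : IsPolicy π) (hμ : IsPolicy μ)
    (hΛ : inLambda T p π r b μ) (n t : ℕ) (hT : n + t + 1 = T) (s : S) :
    optVar T p π r b n t s ≤ Var p μ n t s (Gest π μ r b n t s) :=
  optVar_le_Var_Gest_of_le hp hπ hμ hΛ n t hT s (uAux_le_uWith hp hπ hμ hΛ n t hT s)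

theorem uAux_succ_eq (hp : IsKernel p) (hπ : IsPolicy π) (n t : ℕ) (hT : n + 1 + t + 1 = T)
    (s : S) (a : A) :
    uAux T p π r b (n + 1) t s a = (qf T p π r t s a - b t s a) ^ 2 + nuf T p π r t s a +
      ∑ s', p s a s' * optVar T p π r b n (t + 1) s' := by
  rw [uAux_eq_uWith_mustar hT, uWith]
  simp only [Var_Gest_mustar hp hπ n (t + 1) (show n + (t + 1) + 1 = T by omega)]

theorem optVar_bstar_le_of_le (hp : IsKernel p) (hπ : IsPolicy π) {n t : ℕ} (hT : n + t + 1 = T)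
    {s : S}
    (hle : ∀ a, uAux T p π r (bstar T p π r) n t s a + (qf T p π r t s a - b t s a) ^ 2 ≤
      uAux T p π r b n t s a) :
    optVar T p π r (bstar T p π r) n t s ≤ optVar T p π r b n t s := by
  have hgap : meanGap T p π r (bstar T p π r) t s = 0 := by simp [meanGap, bstar]
  have hminkowski := sq_add_sq_le_sq_sum_sqrt (hπ t s).1
    (uAux_nonneg (r := r) (b := bstar T p π r) hp hπ hT s) fun a => qf T p π r t s a - b t s a
  have hmono : (∑ a, π t s a * √(uAux T p π r (bstar T p π r) n t s a +
      (qf T p π r t s a - b t s a) ^ 2)) ^ 2 ≤ (∑ a, π t s a * √(uAux T p π r b n t s a)) ^ 2 := by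
    gcongr with a
    · exact sum_nonneg fun a _ => mul_nonneg ((hπ t s).1 a) (Real.sqrt_nonneg _)
    · exact (hπ t s).1 a
    · exact hle a
  rw [optVar, optVar, hgap, meanGap]
  linarith

theorem optVar_bstar_le (hp : IsKernel p) (hπ : IsPolicy π) (n t : ℕ) (hT : n + t + 1 = T)
    (s : S) : optVar T p π r (bstar T p π r) n t s ≤ optVar T p π r b n t s := by
  induction n generalizing t s with
  | zero =>
    refine optVar_bstar_le_of_le hp hπ hT fun a => ?_
    simp [uAux, bstar]
  | succ n ih =>
    refine optVar_bstar_le_of_le hp hπ hT fun a => ?_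
    have hsum : ∑ s', p s a s' * optVar T p π r (bstar T p π r) n (t + 1) s' ≤
        ∑ s', p s a s' * optVar T p π r b n (t + 1) s' :=
      sum_le_sum fun s' _ => mul_le_mul_of_nonneg_left (ih (t + 1) (by omega) s') ((hp s a).1 s')
    rw [uAux_succ_eq hp hπ n t hT, uAux_succ_eq hp hπ n t hT,
      show bstar T p π r t s a = qf T p π r t s a from rfl, sub_self]
    linarith

end Optimality

theorem doubly_optimal_general {S A : Type} [Fintype S] [Fintype A] [Nonempty A]
    (T : ℕ)
    (p : S → A → S → ℝ) (hp : IsKernel p)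
    (r : S → A → ℝ)
    (π : ℕ → S → A → ℝ) (hπ : IsPolicy π)
    (b : ℕ → S → A → ℝ)
    (μ : ℕ → S → A → ℝ) (hμ : IsPolicy μ) (hΛ : inLambda T p π r b μ)
    (t : ℕ) (ht : t < T) (s : S) :
    VarG T p π (mustar T p π r (bstar T p π r)) r (bstar T p π r) t s ≤
      VarG T p π μ r b t s := by
  have hT : T - 1 - t + t + 1 = T := by omega
  calc VarG T p π (mustar T p π r (bstar T p π r)) r (bstar T p π r) t s
      = optVar T p π r (bstar T p π r) (T - 1 - t) t s := Var_Gest_mustar hp hπ _ t hT s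
    _ ≤ optVar T p π r b (T - 1 - t) t s := optVar_bstar_le hp hπ _ t hT s
    _ ≤ VarG T p π μ r b t s := optVar_le_Var_Gest hp hπ hμ hΛ _ t hT s

/-- Doubly optimal: with `b*_t(s,a) = q_{π,t}(s,a)`, for every baseline `b`,
every behavior policy `μ ∈ Λ^b`, every time `t` and state `s`,
`Var(G^{b*}(τ^{μ^{*,b*}}_{t:T−1})|S_t=s) ≤ Var(G^b(τ^μ_{t:T−1})|S_t=s)`; i.e. the pair
`(μ^{*,b*}, b*)` solves the bi-level variance-minimization problem. -/
theorem doubly_optimal {S A : Type} [Fintype S] [Fintype A] [Nonempty A]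
    (T : ℕ) (hT : 1 ≤ T)
    (p : S → A → S → ℝ) (hp : IsKernel p)
    (r : S → A → ℝ)
    (π : ℕ → S → A → ℝ) (hπ : IsPolicy π)
    (b : ℕ → S → A → ℝ)
    (μ : ℕ → S → A → ℝ) (hμ : IsPolicy μ) (hΛ : inLambda T p π r b μ)
    (t : ℕ) (ht : t < T) (s : S) :
    VarG T p π (mustar T p π r (bstar T p π r)) r (bstar T p π r) t s ≤
      VarG T p π μ r b t s :=
  doubly_optimal_general T p hp r π hπ b μ hμ hΛ t ht s

end DOpt
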